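/- arXiv:2505.07795 — 2 statements merged into one kernel-verified Lean document; each statement's English description precedes it below -/
import Mathlib

section
/- Let D₁, D₂ ≥ 1 and k ≥ 1 be integers, and regard each tensor factor of ((ℂ^{D₁} ⊗ ℂ^{D₂}))^{⊗k} as split into a ℂ^{D₁} part and a ℂ^{D₂} part. For every permutation g ∈ S_k, the partial trace of the permutation operator P_{D₁D₂}(g) over all k of the ℂ^{D₂} factors equals D₂^{l(g)} · P_{D₁}(g). -/
open Matrix

/-- Number of cycles of a permutation, counting fixed points as cycles of length 1. -/
def cycleCount {k : ℕ} (g : Equiv.Perm (Fin k)) : ℕ :=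
  g.cycleType.card + (k - g.support.card)

/-- The permutation operator `P(g)` on the `k`-fold tensor power of `ℂ^I` (for a finite index
type `I`), defined on the standard tensor basis by `P(g) |i_1,…,i_k⟩ = |i_{g(1)},…,i_{g(k)}⟩`.
Taking `I = Fin D` gives `P_D(g)`, and taking `I = Fin D₁ × Fin D₂` gives `P_{D₁D₂}(g)` under
the standard (lexicographic) identification `ℂ^{D₁} ⊗ ℂ^{D₂} ≅ ℂ^{D₁D₂}`. -/
def permMatrixOn (I : Type*) [DecidableEq I] {k : ℕ} (g : Equiv.Perm (Fin k)) :
    Matrix (Fin k → I) (Fin k → I) ℂ :=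
  fun r c => if r = fun a => c (g a) then 1 else 0

/-!
The entry of `P_{D₁D₂}(g)` at `((r, b), (c, b'))` is the product of the entries of `P_{D₁}(g)` at
`(r, c)` and of `P_{D₂}(g)` at `(b, b')`, so the partial trace is `tr P_{D₂}(g) • P_{D₁}(g)`. The
trace counts the maps `b : Fin k → Fin D₂` with `b ∘ g = b`, i.e. the maps constant on the cycles
of `g`, and there are `D₂ ^ l(g)` of those.
-/

namespace Equiv.Perm

variable {α : Type*} {f : Perm α}

theorem SameCycle.apply_eq_of_comp_eq [Finite α] {β : Type*} {b : α → β} (hb : b ∘ f = b) {x y : α}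
    (h : f.SameCycle x y) : b x = b y := by
  obtain ⟨i, -, rfl⟩ := h.exists_pow_eq'
  rw [coe_pow, ← Function.comp_apply (f := b), Function.iterate_invariant hb]

def invariantFunEquiv [Finite α] (f : Perm α) (β : Type*) :
    {b : α → β // b ∘ f = b} ≃ (Quotient (SameCycle.setoid f) → β) where
  toFun b := Quotient.lift b.1 fun _ _ => SameCycle.apply_eq_of_comp_eq b.2
  invFun b := ⟨b ∘ Quotient.mk _, funext fun x => congrArg b (Quotient.sound ⟨-1, by simp⟩)⟩
  left_inv _ := rfl
  right_inv b := funext fun q => Quotient.inductionOn q fun _ => rfl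

variable [Fintype α] [DecidableEq α]

def cycleOrFixedPoint (f : Perm α) (x : α) : f.cycleFactorsFinset ⊕ Function.fixedPoints f :=
  if h : f x = x then .inr ⟨x, h⟩
  else .inl ⟨f.cycleOf x, cycleOf_mem_cycleFactorsFinset_iff.2 (mem_support.2 h)⟩

theorem cycleOrFixedPoint_eq_iff {x y : α} :
    f.cycleOrFixedPoint x = f.cycleOrFixedPoint y ↔ f.SameCycle x y := by
  by_cases hx : f x = x <;> by_cases hy : f y = y <;> simp only [cycleOrFixedPoint, hx, hy,
    dite_true, dite_false, Sum.inl.injEq, Sum.inr.injEq, reduceCtorEq, false_iff, Subtype.mk.injEq]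
  · exact ⟨fun h => Subtype.mk.inj h ▸ SameCycle.refl f x,
      fun h => Subtype.ext (h.eq_of_left hx)⟩
  · exact fun h => hy (h.apply_eq_self_iff.1 hx)
  · exact fun h => hx (h.apply_eq_self_iff.2 hy)
  · exact (sameCycle_iff_cycleOf_eq_of_mem_support (mem_support.2 hx) (mem_support.2 hy)).symm

theorem cycleOrFixedPoint_surjective : Function.Surjective f.cycleOrFixedPoint := by
  rintro (⟨c, hc⟩ | ⟨x, hx⟩)
  · obtain ⟨x, hxc⟩ := (mem_cycleFactorsFinset_iff.1 hc).1.nonempty_support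
    have hfx : f x ≠ x := mem_support.1 (mem_cycleFactorsFinset_support_le hc hxc)
    refine ⟨x, ?_⟩
    simp [cycleOrFixedPoint, hfx, cycle_is_cycleOf hxc hc]
  · exact ⟨x, by simp [cycleOrFixedPoint, show f x = x from hx]⟩

noncomputable def quotientSameCycleEquiv (f : Perm α) :
    Quotient (SameCycle.setoid f) ≃ f.cycleFactorsFinset ⊕ Function.fixedPoints f :=
  (Quotient.congrRight fun _ _ => cycleOrFixedPoint_eq_iff.symm).trans
    (Setoid.quotientKerEquivOfSurjective _ cycleOrFixedPoint_surjective)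

theorem card_quotient_sameCycle (f : Perm α) :
    Nat.card (Quotient (SameCycle.setoid f)) =
      Multiset.card f.cycleType + (Fintype.card α - f.support.card) := by
  rw [Nat.card_congr f.quotientSameCycleEquiv, Nat.card_sum, Nat.card_eq_fintype_card,
    Nat.card_eq_fintype_card, card_fixedPoints, sum_cycleType, cycleType_def, Multiset.card_map]
  simp

end Equiv.Perm

theorem permMatrixOn_prod_apply (I J : Type*) [DecidableEq I] [DecidableEq J] {k : ℕ}
    (g : Equiv.Perm (Fin k)) (r c : Fin k → I) (b b' : Fin k → J) :
    permMatrixOn (I × J) g (fun a => (r a, b a)) (fun a => (c a, b' a)) =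
      permMatrixOn I g r c * permMatrixOn J g b b' := by
  simp only [permMatrixOn, funext_iff, Prod.mk.injEq, forall_and, ite_zero_mul_ite_zero, mul_one]

theorem trace_permMatrixOn (J : Type*) [Fintype J] [DecidableEq J] {k : ℕ}
    (g : Equiv.Perm (Fin k)) :
    trace (permMatrixOn J g) = (Fintype.card J : ℂ) ^ cycleCount g := by
  have hcard : Nat.card {b : Fin k → J // b ∘ g = b} = Fintype.card J ^ cycleCount g := by
    rw [Nat.card_congr (g.invariantFunEquiv J), Nat.card_fun, g.card_quotient_sameCycle,
      Nat.card_eq_fintype_card, Fintype.card_fin]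
    rfl
  simp only [trace, diag, permMatrixOn, Finset.sum_boole]
  rw [← Nat.cast_pow, ← hcard, Nat.card_eq_fintype_card, Fintype.card_subtype]
  simp only [eq_comm (a := _ ∘ _)]
  rfl

theorem partialTrace_permMatrix_general (D₁ D₂ k : ℕ) (g : Equiv.Perm (Fin k)) :
    (fun (r c : Fin k → Fin D₁) => ∑ b : Fin k → Fin D₂,
        permMatrixOn (Fin D₁ × Fin D₂) g (fun a => (r a, b a)) (fun a => (c a, b a)))
      = ((D₂ : ℂ) ^ cycleCount g) • permMatrixOn (Fin D₁) g := by
  funext r c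
  simp only [permMatrixOn_prod_apply, ← Finset.mul_sum]
  change _ * trace (permMatrixOn (Fin D₂) g) = _
  rw [trace_permMatrixOn, Fintype.card_fin, Matrix.smul_apply, smul_eq_mul, mul_comm]

/-- Tracing out all `k` of the `ℂ^{D₂}` factors from the permutation operator `P_{D₁D₂}(g)`
on `((ℂ^{D₁} ⊗ ℂ^{D₂}))^{⊗k}` yields `D₂^{l(g)} · P_{D₁}(g)`. -/
theorem partialTrace_permMatrix (D₁ D₂ k : ℕ) (hD₁ : 1 ≤ D₁) (hD₂ : 1 ≤ D₂) (hk : 1 ≤ k)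
    (g : Equiv.Perm (Fin k)) :
    (fun (r c : Fin k → Fin D₁) => ∑ b : Fin k → Fin D₂,
        permMatrixOn (Fin D₁ × Fin D₂) g (fun a => (r a, b a)) (fun a => (c a, b a)))
      = ((D₂ : ℂ) ^ cycleCount g) • permMatrixOn (Fin D₁) g :=
  partialTrace_permMatrix_general D₁ D₂ k g
end

section
/- Let D ≥ 1 and k ≥ 1 be integers, let g' ∈ S_{k+1} be a permutation fixing k+1 (identified with an element of S_k by restriction), let j ∈ {1, …, k+1}, and let g = g' · τ_j, where τ_j is the transposition exchanging j and k+1 for j ≤ k and τ_{k+1} is the identity. Then the partial trace of the permutation operator P_D(g) on (ℂ^D)^{⊗(k+1)} over the (k+1)-th tensor factor equals P_D(g') on (ℂ^D)^{⊗k} if j ≤ k, and equals D · P_D(g') if j = k+1. -/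
open Equiv Matrix

/-- The permutation operator `P_D(g)` on `(ℂ^D)^{⊗k}`, defined on the standard tensor basis by
`P_D(g) |i_1,…,i_k⟩ = |i_{g(1)},…,i_{g(k)}⟩`. -/
def permMatrix (D : ℕ) {k : ℕ} (g : Equiv.Perm (Fin k)) :
    Matrix (Fin k → Fin D) (Fin k → Fin D) ℂ :=
  fun r c => if r = fun a => c (g a) then 1 else 0

/-- The extension of a permutation of `{1,…,k}` to a permutation of `{1,…,k+1}` fixing the
top element `k+1` (the identification of `S_k` with the stabilizer of `k+1` in `S_{k+1}`). -/
def extendLast {k : ℕ} (g : Equiv.Perm (Fin k)) : Equiv.Perm (Fin (k + 1)) :=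
  finSuccEquivLast.permCongr.symm g.optionCongr

/-- The "transposition" `τ_j ∈ S_{k+1}`: the transposition exchanging `j` and the top element
`k+1` when `j ≤ k`, and the identity permutation when `j = k+1`. -/
def tau {k : ℕ} (j : Fin (k + 1)) : Equiv.Perm (Fin (k + 1)) :=
  if j = Fin.last k then 1 else Equiv.swap j (Fin.last k)

lemma extendLast_castSucc {k : ℕ} (g : Equiv.Perm (Fin k)) (i : Fin k) :
    extendLast g i.castSucc = (g i).castSucc := by
  simp [extendLast, Equiv.permCongr_symm, Equiv.permCongr_apply]

lemma extendLast_last {k : ℕ} (g : Equiv.Perm (Fin k)) :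
    extendLast g (Fin.last k) = Fin.last k := by
  simp [extendLast, Equiv.permCongr_symm, Equiv.permCongr_apply]

/-- For `g = g' · τ_j` with `g' ∈ S_{k+1}` fixing `k+1` (identified with an element of `S_k`),
the partial trace of `P_D(g)` over the `(k+1)`-th tensor factor equals `P_D(g')` if `j ≤ k`,
and `D · P_D(g')` if `j = k+1`. -/
theorem partialTrace_last_permMatrix (D k : ℕ) (hD : 1 ≤ D) (hk : 1 ≤ k)
    (g' : Equiv.Perm (Fin k)) (j : Fin (k + 1)) :
    (fun (r c : Fin k → Fin D) => ∑ b : Fin D,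
        permMatrix D (extendLast g' * tau j) (Fin.snoc r b) (Fin.snoc c b))
      = if j = Fin.last k then (D : ℂ) • permMatrix D g' else permMatrix D g' := by
  by_cases h : j = Fin.last k
  · subst h
    have htau : tau (Fin.last k) = 1 := if_pos rfl
    rw [if_pos rfl, htau, mul_one]
    funext r c
    have key : ∀ b : Fin D,
        ((Fin.snoc r b : Fin (k+1) → Fin D) = fun a => (Fin.snoc c b : Fin (k+1) → Fin D) (extendLast g' a)) ↔
        (r = fun a => c (g' a)) := by
      intro b
      constructor
      · intro hb
        funext i
        have := congrFun hb i.castSucc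
        simpa [extendLast_castSucc] using this
      · intro hb
        funext a
        refine Fin.lastCases ?_ ?_ a
        · simp [extendLast_last]
        · intro i
          simp [extendLast_castSucc, congrFun hb i]
    simp only [permMatrix, key, Finset.sum_const, Finset.card_univ, Fintype.card_fin,
      nsmul_eq_mul, Matrix.smul_apply, smul_eq_mul]
  · have htau : tau j = Equiv.swap j (Fin.last k) := if_neg h
    rw [if_neg h, htau]
    funext r c
    obtain ⟨i, rfl⟩ := Fin.exists_castSucc_eq.2 h
    have key : ∀ b : Fin D,
        ((Fin.snoc r b : Fin (k+1) → Fin D)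
          = fun a => (Fin.snoc c b : Fin (k+1) → Fin D) ((extendLast g' * Equiv.swap i.castSucc (Fin.last k)) a)) ↔
        (b = c (g' i) ∧ r = fun a => c (g' a)) := by
      intro b
      constructor
      · intro hb
        have hlast := congrFun hb (Fin.last k)
        simp only [Equiv.Perm.mul_apply, Equiv.swap_apply_right, extendLast_castSucc,
          Fin.snoc_last, Fin.snoc_castSucc] at hlast
        refine ⟨hlast, ?_⟩
        funext a
        by_cases ha : a = i
        · subst ha
          have := congrFun hb a.castSucc
          simp only [Equiv.Perm.mul_apply, Equiv.swap_apply_left, extendLast_last,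
            Fin.snoc_last, Fin.snoc_castSucc] at this
          rw [this, hlast]
        · have := congrFun hb a.castSucc
          have hsw : Equiv.swap i.castSucc (Fin.last k) a.castSucc = a.castSucc := by
            rw [Equiv.swap_apply_of_ne_of_ne]
            · exact fun hh => ha (Fin.castSucc_injective _ hh)
            · exact (Fin.castSucc_lt_last a).ne
          simpa [Equiv.Perm.mul_apply, hsw, extendLast_castSucc] using this
      · rintro ⟨hb, hr⟩
        funext a
        refine Fin.lastCases ?_ ?_ a
        · simp [Equiv.Perm.mul_apply, Equiv.swap_apply_right, extendLast_castSucc, hb]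
        · intro a
          by_cases ha : a = i
          · subst ha
            simp only [Equiv.Perm.mul_apply, Equiv.swap_apply_left, extendLast_last,
              Fin.snoc_last, Fin.snoc_castSucc]
            rw [congrFun hr a, hb]
          · have hsw : Equiv.swap i.castSucc (Fin.last k) a.castSucc = a.castSucc := by
              rw [Equiv.swap_apply_of_ne_of_ne]
              · exact fun hh => ha (Fin.castSucc_injective _ hh)
              · exact (Fin.castSucc_lt_last a).ne
            simp only [Equiv.Perm.mul_apply, hsw, extendLast_castSucc, Fin.snoc_castSucc]
            exact congrFun hr a
    simp only [permMatrix, key]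
    by_cases hrc : r = fun a => c (g' a)
    · simp [hrc]
    · simp [hrc]
end
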